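/- arXiv:2210.01842 — 2 statements merged into one kernel-verified Lean document; each statement's English description precedes it below -/
import Mathlib

section
/- In the truncated polynomial ring B = k[t_1,...,t_r]/(t_1^p,...,t_r^p) over a field k of characteristic p, if X_1,...,X_r are elements of the Jacobson radical of B that are linearly independent modulo the square of the radical, then the elements 1+X_1,...,1+X_r generate an elementary abelian subgroup of order p^r of the group of units of B. -/
set_option synthInstance.maxHeartbeats 800000
set_option maxHeartbeats 1000000
open MvPolynomial

/-- The truncated polynomial ring `k[t₁,…,t_r]/(t₁^p,…,t_r^p)`. -/
abbrev TruncPoly (k : Type) [Field k] (p r : ℕ) :=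
  MvPolynomial (Fin r) k ⧸
    Ideal.span (Set.range fun i : Fin r => (X i : MvPolynomial (Fin r) k) ^ p)

lemma aux_pow_one_add {B : Type*} [CommRing B] {J : Ideal B} {y : B} (hy : y ∈ J) (n : ℕ) :
    ∃ a ∈ J ^ 2, (1 + y) ^ n = 1 + n • y + a := by
  induction n with
  | zero => exact ⟨0, zero_mem _, by simp⟩
  | succ n ih =>
    obtain ⟨a, ha, he⟩ := ih
    have hyy : y * y ∈ J ^ 2 := by rw [pow_two]; exact Ideal.mul_mem_mul hy hy
    refine ⟨n • (y * y) + a * (1 + y), add_mem (nsmul_mem hyy n)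
      (Ideal.mul_mem_right _ _ ha), ?_⟩
    rw [pow_succ, he]
    simp only [nsmul_eq_mul, Nat.cast_add, Nat.cast_one]
    ring

lemma aux_prod_one_add {B : Type*} [CommRing B] {J : Ideal B} {ι : Type*}
    (z a : ι → B) (hz : ∀ i, z i ∈ J) (ha : ∀ i, a i ∈ J ^ 2) (s : Finset ι) :
    ∃ c ∈ J ^ 2, ∏ i ∈ s, (1 + z i + a i) = 1 + (∑ i ∈ s, z i) + c := by
  induction s using Finset.cons_induction with
  | empty => exact ⟨0, zero_mem _, by simp⟩
  | cons i s hi ih =>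
    obtain ⟨c, hc, he⟩ := ih
    have hS : (∑ j ∈ s, z j) ∈ J := Ideal.sum_mem _ fun j _ => hz j
    have hJ2 : (J : Ideal B) ^ 2 ≤ J := Ideal.pow_le_self two_ne_zero
    refine ⟨c + z i * ((∑ j ∈ s, z j) + c) + a i * (1 + (∑ j ∈ s, z j) + c),
      add_mem (add_mem hc ?_) (Ideal.mul_mem_right _ _ (ha i)), ?_⟩
    · rw [pow_two]; exact Ideal.mul_mem_mul (hz i) (add_mem hS (hJ2 hc))
    · rw [Finset.prod_cons, Finset.sum_cons, he]; ring


/-- if `X₁,…,X_r` are elements of the Jacobson radical of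
`B = k[t₁,…,t_r]/(t₁^p,…,t_r^p)` that are linearly independent modulo the square of the
radical, then the elements `1+X₁,…,1+X_r` generate an elementary abelian subgroup of
order `p^r` of the group of units of `B`. -/
theorem one_add_radical_elements_generate_elementary_abelian
    (k : Type) [Field k] (p : ℕ) [Fact p.Prime] [CharP k p] (r : ℕ)
    (Y : Fin r → TruncPoly k p r)
    (hrad : ∀ i, Y i ∈ (⊥ : Ideal (TruncPoly k p r)).jacobson)
    (hind : LinearIndependent k fun i : Fin r =>
      (Submodule.Quotient.mk (Y i) :
        TruncPoly k p r ⧸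
          Submodule.restrictScalars k
            ((((⊥ : Ideal (TruncPoly k p r)).jacobson) ^ 2 : Ideal (TruncPoly k p r)))))
    (u : Fin r → (TruncPoly k p r)ˣ) (hu : ∀ i, (u i : TruncPoly k p r) = 1 + Y i) :
    Nat.card (Subgroup.closure (Set.range u)) = p ^ r ∧
      (∀ g ∈ Subgroup.closure (Set.range u), g ^ p = 1) ∧
      (∀ g ∈ Subgroup.closure (Set.range u), ∀ h ∈ Subgroup.closure (Set.range u),
        g * h = h * g) := by
  have hp : p.Prime := Fact.out
  have hp0 : p ≠ 0 := hp.ne_zero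
  have hp1 : 1 < p := hp.one_lt
  haveI : NeZero p := ⟨hp0⟩
  let π : MvPolynomial (Fin r) k →+* TruncPoly k p r := Ideal.Quotient.mk _
  -- the evaluation map at 0
  have hIle : Ideal.span (Set.range fun i : Fin r =>
      (X i : MvPolynomial (Fin r) k) ^ p) ≤ RingHom.ker (eval (0 : Fin r → k)) := by
    rw [Ideal.span_le]
    rintro _ ⟨i, rfl⟩
    simp [RingHom.mem_ker, zero_pow hp0]
  let ψ : TruncPoly k p r →+* k := Ideal.Quotient.lift _ (eval (0 : Fin r → k)) fun f hf => hIle hf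
  have hψmk : ∀ f, ψ (π f) = eval (0 : Fin r → k) f := fun f => Ideal.Quotient.lift_mk _ _ _
  have hψsurj : Function.Surjective ψ := fun a => ⟨π (C a), by simp [hψmk]⟩
  have hkermax : (RingHom.ker ψ).IsMaximal := RingHom.ker_isMaximal_of_surjective ψ hψsurj
  have hjac : (⊥ : Ideal (TruncPoly k p r)).jacobson ≤ RingHom.ker ψ := sInf_le ⟨bot_le, hkermax⟩
  -- the maximal ideal as image of span of X's
  set m : Ideal (TruncPoly k p r) := Ideal.map π (Ideal.span (Set.range (X : Fin r → MvPolynomial (Fin r) k)))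
    with hm
  have hker_le : RingHom.ker ψ ≤ m := by
    intro x hx
    obtain ⟨f, rfl⟩ := Ideal.Quotient.mk_surjective x
    have h0 : eval (0 : Fin r → k) f = 0 := by
      rw [← hψmk]; exact hx
    apply Ideal.mem_map_of_mem
    rw [← Set.image_univ, mem_ideal_span_X_image]
    intro d hd
    by_contra hcon
    push_neg at hcon
    have hd0 : d = 0 := Finsupp.ext fun i => by simpa using hcon i (Set.mem_univ i)
    rw [MvPolynomial.eval_zero, MvPolynomial.constantCoeff_eq] at h0
    exact (MvPolynomial.mem_support_iff.mp hd) (hd0 ▸ h0)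
  -- char p in B
  haveI : CharP (TruncPoly k p r) p := by
    have hinj : Function.Injective (algebraMap k (TruncPoly k p r)) := by
      have hli : Function.LeftInverse ψ (algebraMap k (TruncPoly k p r)) := by
        intro a
        have : algebraMap k (TruncPoly k p r) a = π (C a) := by
          rw [← Ideal.Quotient.mk_algebraMap]; rfl
        rw [this, hψmk, eval_C]
      exact hli.injective
    exact charP_of_injective_algebraMap hinj p
  -- every element of m has p-th power zero
  have hmpow : ∀ x ∈ m, x ^ p = 0 := by
    intro x hx
    rw [hm, Ideal.map_span, ← Set.range_comp] at hx
    refine Submodule.span_induction ?_ (by simp [zero_pow hp0]) ?_ ?_ hx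
    · rintro _ ⟨i, rfl⟩
      show (π ((X i : MvPolynomial (Fin r) k))) ^ p = 0
      rw [← map_pow]
      exact Ideal.Quotient.eq_zero_iff_mem.mpr (Ideal.subset_span ⟨i, rfl⟩)
    · intro a b _ _ haz hbz
      rw [add_pow_char, haz, hbz, add_zero]
    · intro a x _ hxz
      rw [smul_eq_mul, mul_pow, hxz, mul_zero]
  have hYm : ∀ i, Y i ∈ m := fun i => hker_le (hjac (hrad i))
  have hYp : ∀ i, Y i ^ p = 0 := fun i => hmpow _ (hYm i)
  -- each u i has order dividing p
  have hup : ∀ i, u i ^ p = 1 := by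
    intro i
    ext
    push_cast
    rw [hu i, add_pow_char, one_pow, hYp i, add_zero]
  -- the homomorphism
  let Φ : Multiplicative (Fin r → ZMod p) →* (TruncPoly k p r)ˣ :=
  { toFun := fun v => ∏ i, u i ^ ((Multiplicative.toAdd v) i).val
    map_one' := by simp
    map_mul' := by
      intro v w
      show (∏ i, u i ^ ((Multiplicative.toAdd (v * w)) i).val) = _
      rw [← Finset.prod_mul_distrib]
      refine Finset.prod_congr rfl fun i _ => ?_
      have : (Multiplicative.toAdd (v * w)) i = Multiplicative.toAdd v i +
          Multiplicative.toAdd w i := rfl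
      rw [this, ZMod.val_add, ← pow_eq_pow_mod _ (hup i), pow_add] }
  have hΦ : ∀ v, Φ v = ∏ i, u i ^ ((Multiplicative.toAdd v) i).val := fun _ => rfl
  -- range of Φ equals the closure
  have hrange : Subgroup.closure (Set.range u) = Φ.range := by
    apply le_antisymm
    · rw [Subgroup.closure_le]
      rintro _ ⟨i, rfl⟩
      refine ⟨Multiplicative.ofAdd (Pi.single i 1), ?_⟩
      rw [hΦ]
      rw [Finset.prod_eq_single i]
      · simp [ZMod.val_one, hp1]
      · intro j _ hj
        simp [Pi.single_eq_of_ne hj]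
      · simp
    · rintro _ ⟨v, rfl⟩
      rw [hΦ]
      refine Finset.prod_induction _ (· ∈ Subgroup.closure (Set.range u))
        (fun a b ha hb => mul_mem ha hb) (one_mem _)
        (fun i _ => pow_mem (Subgroup.subset_closure (Set.mem_range_self i)) _)
  -- injectivity of Φ
  have hΦinj : Function.Injective Φ := by
    rw [injective_iff_map_eq_one]
    intro v hv
    set w := Multiplicative.toAdd v with hw
    have h1 : ∏ i, ((1 + Y i) ^ (w i).val) = (1 : TruncPoly k p r) := by
      have h2 : ((Φ v : (TruncPoly k p r)ˣ) : TruncPoly k p r) = 1 := by rw [hv]; rfl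
      rw [hΦ, Units.coe_prod] at h2
      simpa only [Units.val_pow_eq_pow_val, hu] using h2
    choose a ha he using fun i => aux_pow_one_add (hrad i) ((w i).val)
    have hz : ∀ i, ((w i).val) • Y i ∈ (⊥ : Ideal (TruncPoly k p r)).jacobson := fun i =>
      nsmul_mem (hrad i) _
    obtain ⟨c, hc, hpe⟩ := aux_prod_one_add (fun i => ((w i).val) • Y i) a hz ha Finset.univ
    rw [Finset.prod_congr rfl (fun i _ => he i), hpe] at h1
    have hsum : (∑ i, ((w i).val) • Y i) ∈ ((⊥ : Ideal (TruncPoly k p r)).jacobson ^ 2 : Ideal (TruncPoly k p r)) := by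
      have : (∑ i, ((w i).val) • Y i) = -c := by linear_combination h1
      rw [this]; exact neg_mem hc
    -- pass to the quotient module
    set J2 := Submodule.restrictScalars k
      ((((⊥ : Ideal (TruncPoly k p r)).jacobson) ^ 2 : Ideal (TruncPoly k p r))) with hJ2
    have hq : ∑ i, (((w i).val : k)) • (Submodule.Quotient.mk (Y i) : TruncPoly k p r ⧸ J2) = 0 := by
      have : ((Submodule.mkQ J2) (∑ i, ((w i).val) • Y i)) = 0 := by
        rw [Submodule.mkQ_apply, Submodule.Quotient.mk_eq_zero]
        exact hsum
      rw [map_sum] at this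
      rw [← this]
      refine Finset.sum_congr rfl fun i _ => ?_
      rw [Submodule.mkQ_apply, Nat.cast_smul_eq_nsmul, ← Submodule.Quotient.mk_smul]
    have hzero : ∀ i, (((w i).val : k)) = 0 :=
      Fintype.linearIndependent_iff.mp hind _ hq
    have hv0 : ∀ i, w i = 0 := by
      intro i
      have hdvd : p ∣ (w i).val := (CharP.cast_eq_zero_iff k p _).mp (hzero i)
      have := Nat.eq_zero_of_dvd_of_lt hdvd (ZMod.val_lt (w i))
      exact (ZMod.val_eq_zero _).mp this
    show v = 1
    have : w = 0 := funext hv0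
    rw [hw] at this
    exact Multiplicative.toAdd.injective (by simpa using this)
  -- counting
  refine ⟨?_, ?_, ?_⟩
  · rw [hrange]
    have e : Multiplicative (Fin r → ZMod p) ≃ Φ.range :=
      (MonoidHom.ofInjective hΦinj).toEquiv
    rw [← Nat.card_congr e]
    have : Nat.card (Multiplicative (Fin r → ZMod p)) = Nat.card (Fin r → ZMod p) := rfl
    rw [this, Nat.card_pi]
    simp [Nat.card_zmod]
  · intro g hg
    rw [hrange] at hg
    obtain ⟨v, rfl⟩ := hg
    rw [← map_pow]
    convert map_one Φ
    show v ^ p = 1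
    have : Multiplicative.toAdd (v ^ p) = 0 := by
      funext i
      show p • (Multiplicative.toAdd v i) = 0
      rw [nsmul_eq_mul, ZMod.natCast_self, zero_mul]
    exact Multiplicative.toAdd.injective (by simpa using this)
  · intro g _ h _
    exact mul_comm g h
end

section
/- Let A be a finite-dimensional self-injective k-algebra and E a module with an increasing exhaustive filtration by submodules E_0 ⊆ E_1 ⊆ ... with union E. Suppose ζ : E → M is a homomorphism with ζ(E_n) = 0 and such that the induced map E_{n+1}/E_n → M factors through a projective A-module. Then there exists γ : E → M factoring through a projective module with (ζ - γ)(E_{n+1}) = 0. -/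
/-- Baer's criterion passes to finsupps over a Noetherian ring. -/
lemma baer_finsupp (A : Type) [Ring A] [IsNoetherianRing A]
    (hA : Module.Baer A A) (ι : Type) : Module.Baer A (ι →₀ A) := by
  classical
  intro I g
  -- the range of `g` is finitely generated, hence supported on a finite set
  have hfg : (LinearMap.range g).FG := by
    have : (⊤ : Submodule A ↥I).FG := IsNoetherian.noetherian _
    simpa [Submodule.map_top] using this.map g
  obtain ⟨v, hv⟩ := hfg
  set s : Finset ι := v.sup Finsupp.support with hs
  have hrange : LinearMap.range g ≤ Finsupp.supported A A (↑s : Set ι) := by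
    rw [← hv, Submodule.span_le]
    intro x hx
    rw [SetLike.mem_coe, Finsupp.mem_supported]
    exact_mod_cast Finset.le_sup (f := Finsupp.support) hx
  -- extend each coordinate map using Baer for `A`
  choose e he using fun j : ι => hA I ((Finsupp.lapply j).comp g)
  refine ⟨∑ j ∈ s, (Finsupp.lsingle j).comp (e j), fun x hx => ?_⟩
  have hsupp : (g ⟨x, hx⟩).support ⊆ s := by
    have := hrange ⟨⟨x, hx⟩, rfl⟩
    rwa [Finsupp.mem_supported, Finset.coe_subset] at this
  calc (∑ j ∈ s, (Finsupp.lsingle j).comp (e j)) x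
      = ∑ j ∈ s, Finsupp.single j ((g ⟨x, hx⟩) j) := by
        rw [LinearMap.sum_apply]
        exact Finset.sum_congr rfl fun j _ => by
          simp [he j x hx]
    _ = ∑ j ∈ (g ⟨x, hx⟩).support, Finsupp.single j ((g ⟨x, hx⟩) j) :=
        (Finset.sum_subset hsupp (fun j _ hj => by
          rw [Finsupp.notMem_support_iff.mp hj, Finsupp.single_zero])).symm
    _ = g ⟨x, hx⟩ := Finsupp.sum_single _

/-- A projective module over a Noetherian self-injective ring is injective. -/
lemma injective_of_projective (A : Type) [Ring A] [IsNoetherianRing A]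
    (hself : Module.Injective A A) (P : Type) [AddCommGroup P] [Module A P]
    [hP : Module.Projective A P] : Module.Injective A P := by
  have hA : Module.Baer A A := Module.Baer.of_injective hself
  obtain ⟨s, hs⟩ := hP.out
  refine Module.Baer.injective (fun I g => ?_)
  obtain ⟨g', hg'⟩ := baer_finsupp A hA P I (s.comp g)
  refine ⟨(Finsupp.linearCombination A id).comp g', fun x hx => ?_⟩
  simp only [LinearMap.comp_apply]
  rw [hg' x hx]
  exact hs _

/-- let `A` be a finite-dimensional self-injective `k`-algebra and `E` a
module with an increasing exhaustive filtration `E₀ ⊆ E₁ ⊆ ⋯` with union `E`.  Suppose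
`ζ : E → M` is a homomorphism vanishing on `E_n` such that the induced map
`E_{n+1}/E_n → M` factors through a projective `A`-module.  Then there exists
`γ : E → M` factoring through a projective module with `(ζ - γ)(E_{n+1}) = 0`. -/
theorem kill_one_more_filtration_step
    (k : Type) [Field k] (A : Type) [Ring A] [Algebra k A] [FiniteDimensional k A]
    (hself : Module.Injective A A)
    (E M : Type) [AddCommGroup E] [Module A E] [AddCommGroup M] [Module A M]
    (F : ℕ → Submodule A E) (hmono : Monotone F) (hexh : (⨆ n, F n) = ⊤)
    (ζ : E →ₗ[A] M) (n : ℕ) (hvan : F n ≤ LinearMap.ker ζ)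
    -- the induced map on `E_{n+1}/E_n` …
    (ζbar : (↥(F (n+1)) ⧸ (F n).comap (F (n+1)).subtype) →ₗ[A] M)
    (hζbar : ∀ x : ↥(F (n+1)), ζbar (Submodule.Quotient.mk x) = ζ (x : E))
    -- … factors through a projective module
    (hfac : ∃ (P : Type) (_ : AddCommGroup P) (_ : Module A P)
      (_ : Module.Projective A P)
      (f : (↥(F (n+1)) ⧸ (F n).comap (F (n+1)).subtype) →ₗ[A] P) (g : P →ₗ[A] M),
      g.comp f = ζbar) :
    ∃ γ : E →ₗ[A] M,
      (∃ (P : Type) (_ : AddCommGroup P) (_ : Module A P)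
        (_ : Module.Projective A P) (f : E →ₗ[A] P) (g : P →ₗ[A] M), g.comp f = γ) ∧
      F (n+1) ≤ LinearMap.ker (ζ - γ) := by
  haveI : IsNoetherianRing A :=
    isNoetherianRing_iff.mpr (isNoetherian_of_tower k inferInstance)
  obtain ⟨P, _, _, hPproj, f, g, hfg⟩ := hfac
  haveI := hPproj
  have hPinj : Module.Injective A P := injective_of_projective A hself P
  -- extend `f ∘ mk : F(n+1) → P` along the inclusion `F(n+1) ⊆ E`
  obtain ⟨μ, hμ⟩ := hPinj.out (F (n+1)).subtype (F (n+1)).injective_subtype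
    (f.comp ((F n).comap (F (n+1)).subtype).mkQ)
  refine ⟨g.comp μ, ⟨P, ‹_›, ‹_›, ‹_›, μ, g, rfl⟩, fun x hx => ?_⟩
  have h1 := hμ ⟨x, hx⟩
  have h2 : g (f (Submodule.Quotient.mk (⟨x, hx⟩ : ↥(F (n+1))))) = ζ x := by
    rw [← LinearMap.comp_apply, hfg, hζbar]
  have h1' : μ x = f (Submodule.Quotient.mk (⟨x, hx⟩ : ↥(F (n+1)))) := h1
  simp only [LinearMap.mem_ker, LinearMap.sub_apply, LinearMap.comp_apply]
  rw [h1', h2, sub_self]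
end
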